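/- arXiv:1403.7982 — 2 statements merged into one kernel-verified Lean document; each statement's English description precedes it below -/
import Mathlib

section
/- Let a, b, t_1, t_2, … be commuting formal variables. Then in the ring of formal power series over ℤ one has the identity Σ_{p,q ≥ 0} Σ_{λ ⊢ p+q} #syd(λ;p,q) · a^p b^q t_λ = ∏_{k=1}^∞ (1 − a^k b^k t_{2k})^{−2} · (1 − a^{k−1} b^k t_{2k−1})^{−1} · (1 − a^k b^{k−1} t_{2k−1})^{−1}, where for λ = [1^{m_1} · 2^{m_2} ⋯] (m_i the multiplicity of i in λ) one sets t_λ = t_1^{m_1} t_2^{m_2} ⋯. Equivalently: for all p, q ≥ 0 and every partition λ of p+q, #syd(λ;p,q) equals the coefficient of the monomial a^p b^q t_λ in the infinite product (which is well defined since only finitely many factors contribute to each monomial). -/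
open Finset

/-- A signed Young diagram of shape `lam` and signature `(p, q)`, encoded by the
function `f` sending each part length `i` to the number of rows of length `i`
whose leading sign is `+`.  A row of length `i` with leading sign `+` has
`(i+1)/2` plus-boxes and `i/2` minus-boxes, and vice versa for leading sign `-`. -/
structure SYD {n : ℕ} (lam : Nat.Partition n) (p q : ℕ) : Type where
  f : ℕ → ℕ
  le_mult : ∀ i, f i ≤ Multiset.count i lam.parts
  plus_eq : ∑ i ∈ lam.parts.toFinset,
      (f i * ((i + 1) / 2) + (Multiset.count i lam.parts - f i) * (i / 2)) = p
  minus_eq : ∑ i ∈ lam.parts.toFinset,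
      (f i * (i / 2) + (Multiset.count i lam.parts - f i) * ((i + 1) / 2)) = q

/-- Index type for the formal variables: `Sum.inr true = a`, `Sum.inr false = b`,
`Sum.inl i = t_i`. -/
abbrev Var : Type := ℕ ⊕ Bool

noncomputable def va : MvPowerSeries Var ℤ := MvPowerSeries.X (Sum.inr true)
noncomputable def vb : MvPowerSeries Var ℤ := MvPowerSeries.X (Sum.inr false)
noncomputable def vt (i : ℕ) : MvPowerSeries Var ℤ := MvPowerSeries.X (Sum.inl i)

/-- `(1 - φ)⁻¹` as a formal power series (the inverse of `1 - φ`, which has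
constant term `1`). -/
noncomputable def geomInv (φ : MvPowerSeries Var ℤ) : MvPowerSeries Var ℤ :=
  MvPowerSeries.invOfUnit (1 - φ) 1

/-- The exponent of the monomial `a^p b^q t_λ`. -/
noncomputable def degOf {n : ℕ} (lam : Nat.Partition n) (p q : ℕ) : Var →₀ ℕ :=
  Finsupp.single (Sum.inr true) p + Finsupp.single (Sum.inr false) q +
    ∑ i ∈ lam.parts.toFinset, Finsupp.single (Sum.inl i) (Multiset.count i lam.parts)

/-!
Each factor is a geometric series, `(1 - a^x b^y t_i)⁻¹ = ∑ₘ (a^x b^y t_i)^m`, so the coefficient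
of `a^p b^q t_λ` in a product of such factors counts the choices of one exponent per factor with
the exponent vectors summing to `(p, q, λ)`. A row of length `i` with leading sign `+` has
monomial `a^⌈i/2⌉ b^⌊i/2⌋ t_i`, one with leading sign `−` has `a^⌊i/2⌋ b^⌈i/2⌉ t_i`, and the
`k`-th factor of the product is the product of the two geometric series of these monomials for
`i = 2k - 1` and for `i = 2k` (for even `i` both are `a^k b^k t_{2k}`, whence the square). Choosing
the exponents thus means choosing, for each length `i`, how many of the rows of length `i` in `λ`
start with `+` and how many with `−`, so that there are `p` plus-boxes and `q` minus-boxes in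
total: a signed Young diagram. Rows of `λ` have length at most `p + q ≤ N`, so the finite product
suffices.
-/

open MvPowerSeries

theorem Finsupp.nsmul_left_injective {σ : Type*} {d : σ →₀ ℕ} (hd : d ≠ 0) :
    Function.Injective fun k : ℕ => k • d := by
  intro a b h
  obtain ⟨x, hx⟩ := Finsupp.ne_iff.mp hd
  have := DFunLike.congr_fun h x
  simp only [Finsupp.smul_apply, smul_eq_mul] at this
  exact Nat.eq_of_mul_eq_mul_right (Nat.pos_of_ne_zero hx) this

theorem Finsupp.exists_nsmul_eq_iff {σ : Type*} {d e : σ →₀ ℕ} :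
    (∃ k : ℕ, k • d = e) ↔ e = 0 ∨ d ≤ e ∧ ∃ k : ℕ, k • d = e - d := by
  constructor
  · rintro ⟨_ | k, rfl⟩
    · exact .inl (zero_nsmul d)
    · exact .inr ⟨by simp [succ_nsmul], k, by simp [succ_nsmul]⟩
  · rintro (rfl | ⟨hde, k, hk⟩)
    · exact ⟨0, zero_nsmul d⟩
    · exact ⟨k + 1, by rw [succ_nsmul, hk, tsub_add_cancel_of_le hde]⟩

theorem geomInv_eq_of_mul_eq_one {φ ψ : MvPowerSeries Var ℤ} (hφ : constantCoeff φ = 0)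
    (h : (1 - φ) * ψ = 1) : geomInv φ = ψ := by
  have hinv : geomInv φ * (1 - φ) = 1 := invOfUnit_mul (1 - φ) 1 (by simp [hφ])
  calc geomInv φ = geomInv φ * ((1 - φ) * ψ) := by rw [h, mul_one]
    _ = ψ := by rw [← mul_assoc, hinv, one_mul]

open Classical in
theorem coeff_geomInv_monomial {d : Var →₀ ℕ} (hd : d ≠ 0) (e : Var →₀ ℕ) :
    coeff e (geomInv (monomial d 1)) = if ∃ k : ℕ, k • d = e then 1 else 0 := by
  let S : MvPowerSeries Var ℤ := fun e => if ∃ k : ℕ, k • d = e then 1 else 0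
  suffices geomInv (monomial d 1) = S by rw [this, coeff_apply]
  refine geomInv_eq_of_mul_eq_one (by
    rw [← coeff_zero_eq_constantCoeff_apply, coeff_monomial, if_neg hd.symm]) (ext fun e => ?_)
  rw [sub_mul, one_mul, map_sub, coeff_monomial_mul, coeff_one, coeff_apply, coeff_apply]
  simp only [S, Finsupp.exists_nsmul_eq_iff (e := e), one_mul]
  by_cases he : e = 0
  · subst he
    have : ¬ d ≤ 0 := fun h => hd (nonpos_iff_eq_zero.mp h)
    simp [this]
  · by_cases hde : d ≤ e <;> simp [he, hde]

open Classical in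
theorem card_filter_finsuppAntidiag_exists_nsmul {ι σ : Type*} (s : Finset ι)
    (d : ι → σ →₀ ℕ) (hd : ∀ j ∈ s, d j ≠ 0) (E : σ →₀ ℕ) :
    #{l ∈ s.finsuppAntidiag E | ∀ j ∈ s, ∃ k : ℕ, k • d j = l j} =
      Nat.card {m : ι → ℕ // (∀ j ∉ s, m j = 0) ∧ ∑ j ∈ s, m j • d j = E} := by
  let toFinsupp (m : ι → ℕ) : ι →₀ (σ →₀ ℕ) :=
    Finsupp.indicator s fun j _ => m j • d j
  have toFinsupp_apply (m : ι → ℕ) {j : ι} (hj : j ∈ s) : toFinsupp m j = m j • d j :=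
    Finsupp.indicator_of_mem hj _
  rw [← Nat.card_eq_finsetCard]
  symm
  refine Nat.card_eq_of_bijective (fun m => ⟨toFinsupp m.1, ?_⟩) ⟨?_, ?_⟩
  · rw [mem_filter, mem_finsuppAntidiag]
    refine ⟨⟨?_, Finsupp.support_indicator_subset _ _⟩,
      fun j hj => ⟨m.1 j, (toFinsupp_apply _ hj).symm⟩⟩
    exact (sum_congr rfl fun j hj => toFinsupp_apply _ hj).trans m.2.2
  · rintro ⟨m, hm⟩ ⟨m', hm'⟩ h
    refine Subtype.ext (funext fun j => ?_)
    by_cases hj : j ∈ s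
    · have := DFunLike.congr_fun (congrArg Subtype.val h) j
      rw [toFinsupp_apply _ hj, toFinsupp_apply _ hj] at this
      exact Finsupp.nsmul_left_injective (hd j hj) this
    · exact (hm.1 j hj).trans (hm'.1 j hj).symm
  · rintro ⟨l, hl⟩
    rw [mem_filter, mem_finsuppAntidiag] at hl
    obtain ⟨⟨hsum, hsupp⟩, hmult⟩ := hl
    choose! k hk using hmult
    let m j := if j ∈ s then k j else 0
    have hm (j) (hj : j ∈ s) : m j • d j = l j := by simp only [m, if_pos hj, hk j hj]
    refine ⟨⟨m, fun j hj => if_neg hj, (sum_congr rfl hm).trans hsum⟩,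
      Subtype.ext (Finsupp.ext fun j => ?_)⟩
    by_cases hj : j ∈ s
    · exact (toFinsupp_apply m hj).trans (hm j hj)
    · rw [Finsupp.indicator_of_notMem hj, Finsupp.notMem_support_iff.mp (mt (hsupp ·) hj)]

theorem coeff_prod_geomInv_monomial {ι : Type*} (s : Finset ι)
    (d : ι → Var →₀ ℕ) (hd : ∀ j ∈ s, d j ≠ 0) (E : Var →₀ ℕ) :
    coeff E (∏ j ∈ s, geomInv (monomial (d j) 1)) =
      Nat.card {m : ι → ℕ // (∀ j ∉ s, m j = 0) ∧ ∑ j ∈ s, m j • d j = E} := by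
  classical
  rw [coeff_prod, sum_congr rfl fun l _ => (prod_congr rfl fun j hj =>
    coeff_geomInv_monomial (hd j hj) (l j)).trans prod_boole, sum_boole, Nat.cast_inj]
  convert card_filter_finsuppAntidiag_exists_nsmul s d hd E

noncomputable def abtExp (x y i : ℕ) : Var →₀ ℕ :=
  Finsupp.single (Sum.inr true) x + Finsupp.single (Sum.inr false) y +
    Finsupp.single (Sum.inl i) 1

theorem va_pow_mul_vb_pow_mul_vt (x y i : ℕ) :
    va ^ x * vb ^ y * vt i = monomial (abtExp x y i) 1 := by
  rw [va, vb, vt, X_pow_eq, X_pow_eq, X_def, monomial_mul_monomial, monomial_mul_monomial,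
    one_mul, one_mul, abtExp]

-- The exponent of `a^#(+) b^#(−) t_i` for a row of length `i` with leading sign
-- `+` (`true`) or `−` (`false`).
noncomputable def rowExp (i : ℕ) : Bool → Var →₀ ℕ
  | true => abtExp ((i + 1) / 2) (i / 2) i
  | false => abtExp (i / 2) ((i + 1) / 2) i

theorem rowExp_ne_zero (i : ℕ) (s : Bool) : rowExp i s ≠ 0 := by
  intro h
  have := DFunLike.congr_fun h (Sum.inl i)
  cases s <;> simp [rowExp, abtExp] at this

theorem Finset.prod_Icc_one_two_mul {M : Type*} [CommMonoid M] (g : ℕ → M) (N : ℕ) :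
    ∏ i ∈ Icc 1 (2 * N), g i = ∏ k ∈ Icc 1 N, g (2 * k - 1) * g (2 * k) := by
  induction N with
  | zero => simp
  | succ N ih =>
    rw [show 2 * (N + 1) = 2 * N + 1 + 1 by ring, prod_Icc_succ_top (by omega),
      prod_Icc_succ_top (by omega), ih, prod_Icc_succ_top (by omega), mul_assoc]
    rfl

theorem prod_Icc_geomInv_eq_prod_rowExp (N : ℕ) :
    ∏ k ∈ Icc 1 N, (geomInv (va ^ k * vb ^ k * vt (2 * k))) ^ 2 *
        geomInv (va ^ (k - 1) * vb ^ k * vt (2 * k - 1)) *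
        geomInv (va ^ k * vb ^ (k - 1) * vt (2 * k - 1)) =
      ∏ j ∈ Icc 1 (2 * N) ×ˢ univ, geomInv (monomial (rowExp j.1 j.2) 1) := by
  rw [prod_product, Finset.prod_Icc_one_two_mul]
  refine prod_congr rfl fun k hk => ?_
  have hk : 1 ≤ k := (mem_Icc.mp hk).1
  simp only [Fintype.prod_bool, rowExp, va_pow_mul_vb_pow_mul_vt]
  rw [show (2 * k - 1 + 1) / 2 = k by omega, show (2 * k - 1) / 2 = k - 1 by omega,
    show (2 * k + 1) / 2 = k by omega, show 2 * k / 2 = k by omega]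
  ring

section Coordinates

variable (T : Finset ℕ) (m : ℕ × Bool → ℕ)

theorem sum_smul_rowExp_apply_inl (i : ℕ) :
    (∑ j ∈ T ×ˢ univ, m j • rowExp j.1 j.2) (Sum.inl i) =
      if i ∈ T then m (i, true) + m (i, false) else 0 := by
  simp [sum_product, rowExp, abtExp, Finsupp.single_apply, sum_add_distrib,
    ← ite_add_zero]

theorem sum_smul_rowExp_apply_inr_true :
    (∑ j ∈ T ×ˢ univ, m j • rowExp j.1 j.2) (Sum.inr true) =
      ∑ i ∈ T, (m (i, true) * ((i + 1) / 2) + m (i, false) * (i / 2)) := by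
  simp [sum_product, rowExp, abtExp]

theorem sum_smul_rowExp_apply_inr_false :
    (∑ j ∈ T ×ˢ univ, m j • rowExp j.1 j.2) (Sum.inr false) =
      ∑ i ∈ T, (m (i, true) * (i / 2) + m (i, false) * ((i + 1) / 2)) := by
  simp [sum_product, rowExp, abtExp]

end Coordinates

section RowCount

variable {n : ℕ} (lam : Nat.Partition n) (p q : ℕ)

theorem degOf_apply_inl (i : ℕ) : degOf lam p q (Sum.inl i) = Multiset.count i lam.parts := by
  simpa [degOf, Finsupp.single_apply] using fun h => (Multiset.count_eq_zero.mpr h).symm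

theorem degOf_apply_inr_true : degOf lam p q (Sum.inr true) = p := by
  simp [degOf]

theorem degOf_apply_inr_false : degOf lam p q (Sum.inr false) = q := by
  simp [degOf]

-- `m (i, true)` and `m (i, false)` count the rows of length `i` with leading sign `+` and `−`.
def IsRowCount (m : ℕ × Bool → ℕ) : Prop :=
  (∀ i, m (i, true) + m (i, false) = Multiset.count i lam.parts) ∧
    ∑ i ∈ lam.parts.toFinset, (m (i, true) * ((i + 1) / 2) + m (i, false) * (i / 2)) = p ∧
    ∑ i ∈ lam.parts.toFinset, (m (i, true) * (i / 2) + m (i, false) * ((i + 1) / 2)) = q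

variable {lam} in
theorem eq_zero_of_notMem_parts {m : ℕ × Bool → ℕ}
    (hm : ∀ i, m (i, true) + m (i, false) = Multiset.count i lam.parts) {i : ℕ}
    (hi : i ∉ lam.parts.toFinset) (s : Bool) : m (i, s) = 0 := by
  have := hm i
  rw [Multiset.count_eq_zero.mpr (mt Multiset.mem_toFinset.mpr hi)] at this
  cases s <;> omega

theorem Nat.Partition.toFinset_parts_subset_Icc : lam.parts.toFinset ⊆ Icc 1 n := fun i hi => by
  have hi := Multiset.mem_toFinset.mp hi
  exact mem_Icc.mpr ⟨lam.parts_pos hi, lam.le_of_mem_parts hi⟩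

theorem sum_smul_rowExp_eq_degOf_iff {N : ℕ} (hN : n ≤ N) (m : ℕ × Bool → ℕ) :
    ((∀ j ∉ Icc 1 (2 * N) ×ˢ univ, m j = 0) ∧
        ∑ j ∈ Icc 1 (2 * N) ×ˢ univ, m j • rowExp j.1 j.2 = degOf lam p q) ↔
      IsRowCount lam p q m := by
  have hsub : lam.parts.toFinset ⊆ Icc 1 (2 * N) :=
    lam.toFinset_parts_subset_Icc.trans (Icc_subset_Icc le_rfl (by omega))
  have sum_eq (hm : ∀ i, m (i, true) + m (i, false) = Multiset.count i lam.parts)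
      (c d : ℕ → ℕ) : ∑ i ∈ Icc 1 (2 * N), (m (i, true) * c i + m (i, false) * d i) =
        ∑ i ∈ lam.parts.toFinset, (m (i, true) * c i + m (i, false) * d i) :=
    (sum_subset hsub fun i _ hi => by
      simp [eq_zero_of_notMem_parts hm hi]).symm
  simp only [Finsupp.ext_iff, Sum.forall, Bool.forall_bool, sum_smul_rowExp_apply_inl,
    sum_smul_rowExp_apply_inr_true, sum_smul_rowExp_apply_inr_false, degOf_apply_inl,
    degOf_apply_inr_true, degOf_apply_inr_false, IsRowCount]
  constructor
  · rintro ⟨hvanish, hcount, hb, ha⟩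
    have hm (i : ℕ) : m (i, true) + m (i, false) = Multiset.count i lam.parts := by
      rw [← hcount i]
      split_ifs with hi
      · rfl
      · rw [hvanish (i, true) (by simp [hi]), hvanish (i, false) (by simp [hi])]
    exact ⟨hm, (sum_eq hm _ _).symm.trans ha, (sum_eq hm _ _).symm.trans hb⟩
  · rintro ⟨hm, ha, hb⟩
    have hvanish (i : ℕ) (hi : i ∉ Icc 1 (2 * N)) (s : Bool) : m (i, s) = 0 :=
      eq_zero_of_notMem_parts hm (mt (hsub ·) hi) s
    refine ⟨fun ⟨i, s⟩ hj => hvanish i (by simpa using hj) s, fun i => ?_,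
      (sum_eq hm _ _).trans hb, (sum_eq hm _ _).trans ha⟩
    split_ifs with hi
    · exact hm i
    · rw [← hm i, hvanish i hi, hvanish i hi]

def SYD.equivRowCount : SYD lam p q ≃ {m : ℕ × Bool → ℕ // IsRowCount lam p q m} where
  toFun T := ⟨fun
      | (i, true) => T.f i
      | (i, false) => Multiset.count i lam.parts - T.f i,
    fun i => Nat.add_sub_cancel' (T.le_mult i), T.plus_eq, T.minus_eq⟩
  invFun m :=
    { f := fun i => m.1 (i, true)
      le_mult := fun i => m.2.1 i ▸ Nat.le_add_right _ _
      plus_eq := (sum_congr rfl fun i _ => by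
        rw [← m.2.1 i, Nat.add_sub_cancel_left]).trans m.2.2.1
      minus_eq := (sum_congr rfl fun i _ => by
        rw [← m.2.1 i, Nat.add_sub_cancel_left]).trans m.2.2.2 }
  left_inv _ := rfl
  right_inv m := Subtype.ext <| funext fun
    | (i, true) => rfl
    | (i, false) => by
      change Multiset.count i lam.parts - m.1 (i, true) = m.1 (i, false)
      rw [← m.2.1 i, Nat.add_sub_cancel_left]

end RowCount

/-- Generating function for the number of signed Young diagrams (type AIII):
the coefficient of `a^p b^q t_λ` in
`∏_{k≥1} (1 - a^k b^k t_{2k})⁻² (1 - a^{k-1} b^k t_{2k-1})⁻¹ (1 - a^k b^{k-1} t_{2k-1})⁻¹`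
is `#syd(λ; p, q)`.  Only the factors with `k ≤ p + q` contribute to this
coefficient, so the infinite product is represented by the finite product over
`1 ≤ k ≤ N` for any `N ≥ p + q`. -/
theorem stmt0 (p q : ℕ) (lam : Nat.Partition (p + q)) (N : ℕ) (hN : p + q ≤ N) :
    (Nat.card (SYD lam p q) : ℤ) =
      MvPowerSeries.coeff (R := ℤ) (degOf lam p q)
        (∏ k ∈ Finset.Icc 1 N,
          (geomInv (va ^ k * vb ^ k * vt (2 * k))) ^ 2 *
            geomInv (va ^ (k - 1) * vb ^ k * vt (2 * k - 1)) *
            geomInv (va ^ k * vb ^ (k - 1) * vt (2 * k - 1))) := by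
  rw [prod_Icc_geomInv_eq_prod_rowExp,
    coeff_prod_geomInv_monomial _ _ (fun j _ => rowExp_ne_zero j.1 j.2),
    Nat.card_congr (SYD.equivRowCount lam p q),
    Nat.card_congr (Equiv.subtypeEquivRight (sum_smul_rowExp_eq_degOf_iff lam p q hN))]
end

section
/- Let a, b, t_1, t_2, … be commuting formal variables. Then in the ring of formal power series over ℤ one has the identity Σ_{p,q ≥ 0 even} Σ_{λ ⊢ p+q} #syd_CII(λ;p,q) · a^p b^q t_λ = ∏_{k=1}^∞ (1 − a^{2k−2} b^{2k} t_{2k−1}^2)^{−1} · (1 − a^{2k} b^{2k−2} t_{2k−1}^2)^{−1} · (1 − a^{2k} b^{2k} t_{2k}^2)^{−1}, where t_λ = t_1^{m_1} t_2^{m_2} ⋯ for λ = [1^{m_1} · 2^{m_2} ⋯] (m_i the multiplicity of i in λ), and #syd_CII(λ;p,q) = 0 unless every part of λ has even multiplicity. Equivalently: for all even p, q ≥ 0 and every partition λ of p+q, #syd_CII(λ;p,q) equals the coefficient of a^p b^q t_λ in the infinite product. -/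
open Finset

/-!
In a diagram of type CII every multiplicity is even, so its rows can be grouped into pairs of
equal rows: two rows of length `2k+1` led by `-` (weight `a^(2k) b^(2k+2) t_(2k+1)^2`), two such
rows led by `+` (weight `a^(2k+2) b^(2k) t_(2k+1)^2`), and, since half of the rows of even length
`2k+2` are led by `+`, one row of each sign of length `2k+2` (weight
`a^(2k+2) b^(2k+2) t_(2k+2)^2`). The numbers of pairs of each kind determine the diagram, and
they range exactly over the ways of writing `a^p b^q t_λ` as a product of powers of these
weights; the latter are counted by the coefficient of the product of geometric series.
-/

namespace MvPowerSeries

variable {σ R : Type*}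

open Classical in
noncomputable def geomSeries [Semiring R] (e : σ →₀ ℕ) : MvPowerSeries σ R :=
  fun d => if ∃ n : ℕ, d = n • e then 1 else 0

open Classical in
theorem coeff_geomSeries [Semiring R] (e d : σ →₀ ℕ) :
    coeff d (geomSeries (R := R) e) = if ∃ n : ℕ, d = n • e then 1 else 0 := rfl

theorem one_sub_monomial_mul_geomSeries [Ring R] {e : σ →₀ ℕ} (he : e ≠ 0) :
    (1 - monomial e 1) * geomSeries (R := R) e = 1 := by
  classical
  ext d
  have shifted : (e ≤ d ∧ ∃ n : ℕ, d - e = n • e) ↔ ∃ n : ℕ, d = (n + 1) • e := by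
    constructor
    · rintro ⟨hle, n, hn⟩
      exact ⟨n, by rw [succ_nsmul, ← hn, tsub_add_cancel_of_le hle]⟩
    · rintro ⟨n, rfl⟩
      exact ⟨by simp [succ_nsmul], n, by rw [succ_nsmul, add_tsub_cancel_right]⟩
  have multiple : (∃ n : ℕ, d = n • e) ↔ d = 0 ∨ ∃ n : ℕ, d = (n + 1) • e := by
    constructor
    · rintro ⟨_ | n, rfl⟩
      exacts [Or.inl (zero_nsmul e), Or.inr ⟨n, rfl⟩]
    · rintro (rfl | ⟨n, hn⟩)
      exacts [⟨0, (zero_nsmul e).symm⟩, ⟨n + 1, hn⟩]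
  have nonzero : (∃ n : ℕ, d = (n + 1) • e) → d ≠ 0 := by
    rintro ⟨n, rfl⟩ hn
    exact he (by simpa using hn)
  rw [sub_mul, one_mul, map_sub, coeff_monomial_mul, coeff_geomSeries, coeff_geomSeries,
    coeff_one, one_mul, ← ite_and]
  simp only [shifted, multiple]
  by_cases h : ∃ n : ℕ, d = (n + 1) • e
  · simp [h, nonzero h]
  · simp [h]

theorem invOfUnit_one_sub_monomial [CommRing R] {e : σ →₀ ℕ} (he : e ≠ 0) :
    invOfUnit (1 - monomial e 1) 1 = geomSeries (R := R) e := by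
  classical
  refine left_inv_eq_right_inv (invOfUnit_mul _ _ ?_) (one_sub_monomial_mul_geomSeries he)
  rw [map_sub, constantCoeff_one, ← coeff_zero_eq_constantCoeff_apply, coeff_monomial,
    if_neg (Ne.symm he), sub_zero, Units.val_one]

open Finset in
theorem coeff_prod_geomSeries [CommSemiring R] {ι : Type*} (s : Finset ι) (e : ι → σ →₀ ℕ)
    (he : ∀ j ∈ s, e j ≠ 0) (d : σ →₀ ℕ) :
    coeff d (∏ j ∈ s, geomSeries (R := R) (e j)) =
      Nat.card {c : ι → ℕ // (∀ j ∉ s, c j = 0) ∧ ∑ j ∈ s, c j • e j = d} := by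
  classical
  let solutions := (finsuppAntidiag s d).filter fun l => ∀ j ∈ s, ∃ n : ℕ, l j = n • e j
  have hcoeff : coeff d (∏ j ∈ s, geomSeries (R := R) (e j)) = #solutions := by
    rw [coeff_prod, ← sum_boole]
    refine sum_congr rfl fun l _ => ?_
    simp only [coeff_geomSeries, prod_boole]
  let toSolution (c : {c : ι → ℕ // (∀ j ∉ s, c j = 0) ∧ ∑ j ∈ s, c j • e j = d}) : solutions :=
    ⟨Finsupp.onFinset s (fun j => c.1 j • e j) fun j hj => by
        by_contra hjs; simp [c.2.1 j hjs] at hj,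
      by
        simp only [solutions, mem_filter, mem_finsuppAntidiag, Finsupp.onFinset_apply]
        exact ⟨⟨c.2.2, Finsupp.support_onFinset_subset⟩, fun j _ => ⟨c.1 j, rfl⟩⟩⟩
  rw [hcoeff, ← Nat.card_eq_finsetCard, Nat.card_congr (Equiv.ofBijective toSolution ⟨?_, ?_⟩)]
  · rintro ⟨c, hc⟩ ⟨c', hc'⟩ h
    ext j
    by_cases hj : j ∈ s
    · exact (nsmul_left_strictMono (pos_iff_ne_zero.2 (he j hj))).injective
        (DFunLike.congr_fun (congrArg Subtype.val h) j)
    · exact (hc.1 j hj).trans (hc'.1 j hj).symm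
  · rintro ⟨l, hl⟩
    simp only [solutions, mem_filter, mem_finsuppAntidiag] at hl
    obtain ⟨⟨hsum, hsupp⟩, hmul⟩ := hl
    choose! n hn using hmul
    have hl : ∀ j, (if j ∈ s then n j else 0) • e j = l j := fun j => by
      by_cases hj : j ∈ s
      · rw [if_pos hj, hn j hj]
      · rw [if_neg hj, zero_smul, Finsupp.notMem_support_iff.1 (fun h => hj (hsupp h))]
    refine ⟨⟨fun j => if j ∈ s then n j else 0, fun j hj => if_neg hj, ?_⟩, ?_⟩
    · simpa only [hl] using hsum
    · exact Subtype.ext (Finsupp.ext hl)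

end MvPowerSeries

open Finset
open Finsupp (single single_apply finsetSum_apply)

theorem Nat.eq_zero_or_exists_eq_two_mul_add_one_or_two (i : ℕ) :
    i = 0 ∨ (∃ k, i = 2 * k + 1) ∨ ∃ k, i = 2 * k + 2 := by
  obtain ⟨k, rfl | rfl⟩ := i.even_or_odd'
  · rcases k with _ | k
    exacts [Or.inl rfl, Or.inr (Or.inr ⟨k, by ring⟩)]
  · exact Or.inr (Or.inl ⟨k, rfl⟩)

theorem Finset.sum_range_two_mul_add_one {M : Type*} [AddCommMonoid M] (g : ℕ → M) (N : ℕ) :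
    ∑ i ∈ range (2 * N + 1), g i = g 0 + ∑ k ∈ range N, (g (2 * k + 1) + g (2 * k + 2)) := by
  induction N with
  | zero => simp
  | succ N ih =>
    rw [show 2 * (N + 1) + 1 = 2 * N + 1 + 1 + 1 by ring, sum_range_succ, sum_range_succ, ih,
      sum_range_succ, add_assoc, add_assoc]

namespace Nat.Partition

variable {n : ℕ} (lam : Nat.Partition n)

theorem count_zero_parts : lam.parts.count 0 = 0 :=
  Multiset.count_eq_zero.2 fun h => (lam.parts_pos h).false

theorem count_parts_of_lt {i : ℕ} (hi : n < i) : lam.parts.count i = 0 :=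
  Multiset.count_eq_zero.2 fun h => (le_of_mem_parts h).not_gt hi

end Nat.Partition

/-- The exponent of `a^p b^q t_λ` contributed by a pair of rows: for `j = (k, r)`, two rows of
length `2k+1` led by `-` (`r = 0`) or by `+` (`r = 1`), or two rows of length `2k+2` (`r = 2`),
one led by each sign; it is the exponent in the `r`-th geometric factor for `k + 1`. -/
noncomputable def pairExponent (j : ℕ × Fin 3) : Var →₀ ℕ :=
  ![single (.inr true) (2 * j.1) + single (.inr false) (2 * j.1 + 2) +
      single (.inl (2 * j.1 + 1)) 2,
    single (.inr true) (2 * j.1 + 2) + single (.inr false) (2 * j.1) +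
      single (.inl (2 * j.1 + 1)) 2,
    single (.inr true) (2 * j.1 + 2) + single (.inr false) (2 * j.1 + 2) +
      single (.inl (2 * j.1 + 2)) 2] j.2

theorem pairExponent_ne_zero (j : ℕ × Fin 3) : pairExponent j ≠ 0 := by
  obtain ⟨k, r⟩ := j
  fin_cases r <;> simp [pairExponent]

section Sums

variable (N : ℕ) (c : ℕ × Fin 3 → ℕ)

theorem sum_smul_pairExponent_apply_plus :
    (∑ j ∈ range N ×ˢ univ, c j • pairExponent j) (.inr true) =
      ∑ k ∈ range N, (c (k, 0) * (2 * k) + c (k, 1) * (2 * k + 2) + c (k, 2) * (2 * k + 2)) := by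
  rw [finsetSum_apply, sum_product]
  refine sum_congr rfl fun k _ => ?_
  simp [Fin.sum_univ_three, pairExponent]

theorem sum_smul_pairExponent_apply_minus :
    (∑ j ∈ range N ×ˢ univ, c j • pairExponent j) (.inr false) =
      ∑ k ∈ range N, (c (k, 0) * (2 * k + 2) + c (k, 1) * (2 * k) + c (k, 2) * (2 * k + 2)) := by
  rw [finsetSum_apply, sum_product]
  refine sum_congr rfl fun k _ => ?_
  simp [Fin.sum_univ_three, pairExponent]

theorem sum_smul_pairExponent_apply_length (i : ℕ) :
    (∑ j ∈ range N ×ˢ univ, c j • pairExponent j) (.inl i) =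
      ∑ k ∈ range N, ((if 2 * k + 1 = i then 2 * (c (k, 0) + c (k, 1)) else 0) +
        if 2 * k + 2 = i then 2 * c (k, 2) else 0) := by
  rw [finsetSum_apply, sum_product]
  refine sum_congr rfl fun k _ => ?_
  simp only [Fin.sum_univ_three, pairExponent]
  simp [single_apply]
  split_ifs <;> ring

variable {N c}

theorem sum_smul_pairExponent_apply_odd (hc : ∀ j ∉ range N ×ˢ univ, c j = 0) (k : ℕ) :
    (∑ j ∈ range N ×ˢ univ, c j • pairExponent j) (.inl (2 * k + 1)) =
      2 * (c (k, 0) + c (k, 1)) := by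
  rw [sum_smul_pairExponent_apply_length]
  by_cases hk : k < N
  · rw [sum_eq_single k (fun l _ hl => by simp; omega) (by simp [hk])]
    simp
  · rw [hc (k, 0) (by simp [hk]), hc (k, 1) (by simp [hk])]
    exact sum_eq_zero fun l hl => by simp at hl; simp; omega

theorem sum_smul_pairExponent_apply_even (hc : ∀ j ∉ range N ×ˢ univ, c j = 0) (k : ℕ) :
    (∑ j ∈ range N ×ˢ univ, c j • pairExponent j) (.inl (2 * k + 2)) = 2 * c (k, 2) := by
  rw [sum_smul_pairExponent_apply_length]
  by_cases hk : k < N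
  · rw [sum_eq_single k (fun l _ hl => by simp; omega) (by simp [hk])]
    simp
  · rw [hc (k, 2) (by simp [hk])]
    exact sum_eq_zero fun l hl => by simp at hl; simp; omega

theorem sum_smul_pairExponent_apply_zero :
    (∑ j ∈ range N ×ˢ univ, c j • pairExponent j) (.inl 0) = 0 := by
  rw [sum_smul_pairExponent_apply_length]
  simp

end Sums

section DegOf

variable {n : ℕ} (lam : Nat.Partition n) (p q : ℕ)

theorem degOf_apply_length (i : ℕ) : degOf lam p q (.inl i) = lam.parts.count i := by
  simp [degOf, single_apply, eq_comm (a := 0), Multiset.count_eq_zero]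

theorem degOf_apply_plus : degOf lam p q (.inr true) = p := by
  simp [degOf]

theorem degOf_apply_minus : degOf lam p q (.inr false) = q := by
  simp [degOf]

end DegOf

theorem sum_smul_pairExponent_eq_degOf_iff {n : ℕ} (lam : Nat.Partition n) (p q N : ℕ)
    {c : ℕ × Fin 3 → ℕ} (hc : ∀ j ∉ range N ×ˢ univ, c j = 0) :
    ∑ j ∈ range N ×ˢ univ, c j • pairExponent j = degOf lam p q ↔
      (∀ k, lam.parts.count (2 * k + 1) = 2 * (c (k, 0) + c (k, 1)) ∧
        lam.parts.count (2 * k + 2) = 2 * c (k, 2)) ∧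
      ∑ k ∈ range N, (c (k, 0) * (2 * k) + c (k, 1) * (2 * k + 2) + c (k, 2) * (2 * k + 2)) = p ∧
      ∑ k ∈ range N, (c (k, 0) * (2 * k + 2) + c (k, 1) * (2 * k) + c (k, 2) * (2 * k + 2)) =
        q := by
  rw [← sum_smul_pairExponent_apply_plus, ← sum_smul_pairExponent_apply_minus]
  constructor
  · intro h
    refine ⟨fun k => ⟨?_, ?_⟩, ?_, ?_⟩
    · rw [← degOf_apply_length lam p q, ← h, sum_smul_pairExponent_apply_odd hc]
    · rw [← degOf_apply_length lam p q, ← h, sum_smul_pairExponent_apply_even hc]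
    · rw [h, degOf_apply_plus]
    · rw [h, degOf_apply_minus]
  · rintro ⟨hcount, hp, hq⟩
    ext (i | _ | _)
    · rw [degOf_apply_length]
      obtain ⟨k, rfl | rfl⟩ := i.even_or_odd'
      · rcases k with _ | k
        · rw [sum_smul_pairExponent_apply_zero, lam.count_zero_parts]
        · rw [mul_add_one, sum_smul_pairExponent_apply_even hc, (hcount k).2]
      · rw [sum_smul_pairExponent_apply_odd hc, (hcount k).1]
    · rw [hq, degOf_apply_minus]
    · rw [hp, degOf_apply_plus]

/-- `c` counts the pairs of rows (in the sense of `pairExponent`) of a diagram of shape `lam` in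
which `f i` rows of length `i` are led by `+`. -/
structure IsPairing {n : ℕ} (lam : Nat.Partition n) (f : ℕ → ℕ) (c : ℕ × Fin 3 → ℕ) : Prop where
  plus_zero : f 0 = 0
  plus_odd : ∀ k, f (2 * k + 1) = 2 * c (k, 1)
  count_odd : ∀ k, lam.parts.count (2 * k + 1) = 2 * (c (k, 0) + c (k, 1))
  plus_even : ∀ k, f (2 * k + 2) = c (k, 2)
  count_even : ∀ k, lam.parts.count (2 * k + 2) = 2 * c (k, 2)

namespace IsPairing

variable {n : ℕ} {lam : Nat.Partition n} {f : ℕ → ℕ} {c : ℕ × Fin 3 → ℕ}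

theorem le_count (h : IsPairing lam f c) (i : ℕ) : f i ≤ lam.parts.count i := by
  obtain rfl | ⟨k, rfl⟩ | ⟨k, rfl⟩ := i.eq_zero_or_exists_eq_two_mul_add_one_or_two
  · simp [h.plus_zero]
  · rw [h.plus_odd, h.count_odd]; omega
  · rw [h.plus_even, h.count_even]; omega

theorem two_mul_plus_of_even (h : IsPairing lam f c) {i : ℕ} (hi : Even i) :
    2 * f i = lam.parts.count i := by
  obtain rfl | ⟨k, rfl⟩ | ⟨k, rfl⟩ := i.eq_zero_or_exists_eq_two_mul_add_one_or_two
  · simp [h.plus_zero, lam.count_zero_parts]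
  · exact absurd hi (Nat.not_even_iff_odd.2 ⟨k, rfl⟩)
  · rw [h.plus_even, h.count_even]

theorem even_of_odd (h : IsPairing lam f c) {i : ℕ} (hi : Odd i) :
    Even (lam.parts.count i) ∧ Even (f i) := by
  obtain ⟨k, rfl⟩ := hi
  rw [h.count_odd, h.plus_odd]
  exact ⟨even_two_mul _, even_two_mul _⟩

theorem eq_zero_of_notMem {N : ℕ} (h : IsPairing lam f c) (hN : n ≤ 2 * N) :
    ∀ j ∉ range N ×ˢ univ, c j = 0 := by
  rintro ⟨k, r⟩ hj
  have hk : N ≤ k := by simpa using hj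
  have h1 := h.count_odd k
  have h2 := h.count_even k
  rw [lam.count_parts_of_lt (by omega)] at h1 h2
  fin_cases r <;> simp <;> omega

theorem sum_row_weights (h : IsPairing lam f c) {N : ℕ} (hN : n ≤ 2 * N) (u v : ℕ → ℕ) :
    ∑ i ∈ lam.parts.toFinset, (f i * u i + (lam.parts.count i - f i) * v i) =
      ∑ k ∈ range N, (2 * c (k, 1) * u (2 * k + 1) + 2 * c (k, 0) * v (2 * k + 1) +
        c (k, 2) * (u (2 * k + 2) + v (2 * k + 2))) := by
  have hsupp : lam.parts.toFinset ⊆ range (2 * N + 1) := fun i hi => by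
    have := Nat.Partition.le_of_mem_parts (Multiset.mem_toFinset.1 hi)
    simp; omega
  have hoff : ∀ i ∈ range (2 * N + 1), i ∉ lam.parts.toFinset →
      f i * u i + (lam.parts.count i - f i) * v i = 0 := fun i _ hi => by
    have hcount : lam.parts.count i = 0 := by simpa using hi
    simp [hcount, Nat.le_zero.1 (hcount ▸ h.le_count i)]
  rw [sum_subset hsupp hoff, sum_range_two_mul_add_one, h.plus_zero, lam.count_zero_parts]
  simp only [zero_mul, tsub_self, zero_add]
  refine sum_congr rfl fun k _ => ?_
  rw [h.plus_odd, h.count_odd, h.plus_even, h.count_even,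
    show 2 * (c (k, 0) + c (k, 1)) - 2 * c (k, 1) = 2 * c (k, 0) by omega,
    show 2 * c (k, 2) - c (k, 2) = c (k, 2) by omega]
  ring

theorem unique_plus {f' : ℕ → ℕ} (h : IsPairing lam f c) (h' : IsPairing lam f' c) : f = f' := by
  funext i
  obtain rfl | ⟨k, rfl⟩ | ⟨k, rfl⟩ := i.eq_zero_or_exists_eq_two_mul_add_one_or_two
  · rw [h.plus_zero, h'.plus_zero]
  · rw [h.plus_odd, h'.plus_odd]
  · rw [h.plus_even, h'.plus_even]

theorem unique_pairs {c' : ℕ × Fin 3 → ℕ} (h : IsPairing lam f c) (h' : IsPairing lam f c') :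
    c = c' := by
  funext ⟨k, r⟩
  have := h.plus_odd k; have := h'.plus_odd k; have := h.count_odd k; have := h'.count_odd k
  have := h.plus_even k; have := h'.plus_even k
  fin_cases r <;> simp <;> omega

theorem sum_plus_boxes (h : IsPairing lam f c) {N : ℕ} (hN : n ≤ 2 * N) :
    ∑ i ∈ lam.parts.toFinset, (f i * ((i + 1) / 2) + (lam.parts.count i - f i) * (i / 2)) =
      ∑ k ∈ range N, (c (k, 0) * (2 * k) + c (k, 1) * (2 * k + 2) + c (k, 2) * (2 * k + 2)) := by
  rw [h.sum_row_weights hN]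
  refine sum_congr rfl fun k _ => ?_
  rw [show (2 * k + 1 + 1) / 2 = k + 1 by omega, show (2 * k + 1) / 2 = k by omega,
    show (2 * k + 2 + 1) / 2 = k + 1 by omega]
  ring

theorem sum_minus_boxes (h : IsPairing lam f c) {N : ℕ} (hN : n ≤ 2 * N) :
    ∑ i ∈ lam.parts.toFinset, (f i * (i / 2) + (lam.parts.count i - f i) * ((i + 1) / 2)) =
      ∑ k ∈ range N, (c (k, 0) * (2 * k + 2) + c (k, 1) * (2 * k) + c (k, 2) * (2 * k + 2)) := by
  rw [h.sum_row_weights hN]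
  refine sum_congr rfl fun k _ => ?_
  rw [show (2 * k + 1 + 1) / 2 = k + 1 by omega, show (2 * k + 1) / 2 = k by omega,
    show (2 * k + 2 + 1) / 2 = k + 1 by omega]
  ring

end IsPairing

section Pairing

variable {n : ℕ} (lam : Nat.Partition n)

def pairsOf (f : ℕ → ℕ) (j : ℕ × Fin 3) : ℕ :=
  ![(lam.parts.count (2 * j.1 + 1) - f (2 * j.1 + 1)) / 2, f (2 * j.1 + 1) / 2,
    lam.parts.count (2 * j.1 + 2) / 2] j.2

def plusRowsOf (c : ℕ × Fin 3 → ℕ) (i : ℕ) : ℕ :=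
  if Odd i then 2 * c (i / 2, 1) else lam.parts.count i / 2

variable {lam}

theorem isPairing_pairsOf {f : ℕ → ℕ} (hle : ∀ i, f i ≤ lam.parts.count i)
    (heven : ∀ i, Even i → 2 * f i = lam.parts.count i)
    (hodd : ∀ i, Odd i → Even (lam.parts.count i) ∧ Even (f i)) :
    IsPairing lam f (pairsOf lam f) where
  plus_zero := Nat.le_zero.1 ((hle 0).trans_eq lam.count_zero_parts)
  plus_odd k := by
    have := Nat.even_iff.1 (hodd (2 * k + 1) (odd_two_mul_add_one k)).2
    simp [pairsOf]; omega
  count_odd k := by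
    obtain ⟨hm, hf⟩ := hodd (2 * k + 1) (odd_two_mul_add_one k)
    have := Nat.even_iff.1 hm; have := Nat.even_iff.1 hf; have := hle (2 * k + 1)
    simp [pairsOf]; omega
  plus_even k := by
    have := heven (2 * k + 2) ⟨k + 1, by ring⟩
    simp [pairsOf]; omega
  count_even k := by
    have := heven (2 * k + 2) ⟨k + 1, by ring⟩
    simp [pairsOf]; omega

theorem isPairing_plusRowsOf {c : ℕ × Fin 3 → ℕ}
    (hcount : ∀ k, lam.parts.count (2 * k + 1) = 2 * (c (k, 0) + c (k, 1)) ∧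
      lam.parts.count (2 * k + 2) = 2 * c (k, 2)) :
    IsPairing lam (plusRowsOf lam c) c where
  plus_zero := by simp [plusRowsOf, lam.count_zero_parts]
  plus_odd k := by simp [plusRowsOf, Nat.mul_add_div]
  count_odd k := (hcount k).1
  plus_even k := by
    have h : ¬ Odd (2 * k + 2) := Nat.not_odd_iff_even.2 ⟨k + 1, by ring⟩
    simp only [plusRowsOf, h, if_false, (hcount k).2]
    omega
  count_even k := (hcount k).2

end Pairing

theorem pow_mul_pow_mul_pow_eq_monomial (i j l : ℕ) :
    va ^ i * vb ^ j * vt l ^ 2 = MvPowerSeries.monomial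
      (single (.inr true) i + single (.inr false) j + single (.inl l) 2) 1 := by
  simp only [va, vb, vt, MvPowerSeries.X_pow_eq, MvPowerSeries.monomial_mul_monomial, mul_one]

theorem prod_geomInv_eq_prod_geomSeries (N : ℕ) :
    ∏ k ∈ Icc 1 N,
        geomInv (va ^ (2 * k - 2) * vb ^ (2 * k) * vt (2 * k - 1) ^ 2) *
          geomInv (va ^ (2 * k) * vb ^ (2 * k - 2) * vt (2 * k - 1) ^ 2) *
          geomInv (va ^ (2 * k) * vb ^ (2 * k) * vt (2 * k) ^ 2) =
      ∏ j ∈ range N ×ˢ univ, MvPowerSeries.geomSeries (pairExponent j) := by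
  rw [← Ico_add_one_right_eq_Icc, prod_Ico_eq_prod_range, Nat.add_sub_cancel, prod_product]
  refine prod_congr rfl fun k _ => ?_
  rw [Fin.prod_univ_three, show 2 * (1 + k) - 2 = 2 * k by omega,
    show 2 * (1 + k) - 1 = 2 * k + 1 by omega, show 2 * (1 + k) = 2 * k + 2 by omega]
  simp only [pow_mul_pow_mul_pow_eq_monomial, geomInv]
  have h (r : Fin 3) :=
    MvPowerSeries.invOfUnit_one_sub_monomial (R := ℤ) (pairExponent_ne_zero (k, r))
  exact congr_arg₂ (· * ·) (congr_arg₂ (· * ·) (h 0) (h 1)) (h 2)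

theorem SYD.ext_f {n p q : ℕ} {lam : Nat.Partition n} {T T' : SYD lam p q} (h : T.f = T'.f) :
    T = T' := by
  cases T; cases T'; cases h; rfl

def sydCIIEquiv {n : ℕ} (lam : Nat.Partition n) (p q N : ℕ) (hN : n ≤ 2 * N) :
    {T : SYD lam p q // (∀ i, Even i → 2 * T.f i = lam.parts.count i) ∧
        ∀ i, Odd i → Even (lam.parts.count i) ∧ Even (T.f i)} ≃
      {c : ℕ × Fin 3 → ℕ // (∀ j ∉ range N ×ˢ univ, c j = 0) ∧
        ∑ j ∈ range N ×ˢ univ, c j • pairExponent j = degOf lam p q} where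
  toFun T :=
    have hT := isPairing_pairsOf T.1.le_mult T.2.1 T.2.2
    have hc := hT.eq_zero_of_notMem hN
    ⟨pairsOf lam T.1.f, hc, (sum_smul_pairExponent_eq_degOf_iff lam p q N hc).2
      ⟨fun k => ⟨hT.count_odd k, hT.count_even k⟩,
        (hT.sum_plus_boxes hN).symm.trans T.1.plus_eq,
        (hT.sum_minus_boxes hN).symm.trans T.1.minus_eq⟩⟩
  invFun c :=
    have hdeg := (sum_smul_pairExponent_eq_degOf_iff lam p q N c.2.1).1 c.2.2
    have hc := isPairing_plusRowsOf hdeg.1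
    ⟨⟨plusRowsOf lam c.1, hc.le_count, (hc.sum_plus_boxes hN).trans hdeg.2.1,
        (hc.sum_minus_boxes hN).trans hdeg.2.2⟩,
      fun _ hi => hc.two_mul_plus_of_even hi, fun _ hi => hc.even_of_odd hi⟩
  left_inv T := by
    have hT := isPairing_pairsOf T.1.le_mult T.2.1 T.2.2
    exact Subtype.ext <| SYD.ext_f <|
      (isPairing_plusRowsOf fun k => ⟨hT.count_odd k, hT.count_even k⟩).unique_plus hT
  right_inv c := by
    have hc := isPairing_plusRowsOf ((sum_smul_pairExponent_eq_degOf_iff lam p q N c.2.1).1 c.2.2).1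
    exact Subtype.ext <| (isPairing_pairsOf hc.le_count (fun _ hi => hc.two_mul_plus_of_even hi)
      fun _ hi => hc.even_of_odd hi).unique_pairs hc

theorem stmt3_general (p q : ℕ) (lam : Nat.Partition (p + q))
    (N : ℕ) (hN : p + q ≤ N) :
    (Nat.card {T : SYD lam p q //
        (∀ i, Even i → 2 * T.f i = Multiset.count i lam.parts) ∧
          ∀ i, Odd i → Even (Multiset.count i lam.parts) ∧ Even (T.f i)} : ℤ) =
      MvPowerSeries.coeff (R := ℤ) (degOf lam p q)
        (∏ k ∈ Finset.Icc 1 N,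
          geomInv (va ^ (2 * k - 2) * vb ^ (2 * k) * vt (2 * k - 1) ^ 2) *
            geomInv (va ^ (2 * k) * vb ^ (2 * k - 2) * vt (2 * k - 1) ^ 2) *
            geomInv (va ^ (2 * k) * vb ^ (2 * k) * vt (2 * k) ^ 2)) := by
  rw [prod_geomInv_eq_prod_geomSeries, MvPowerSeries.coeff_prod_geomSeries _ _
    (fun j _ => pairExponent_ne_zero j), Nat.card_congr (sydCIIEquiv lam p q N (by omega))]

/-- Generating function for the number of signed Young diagrams of type CII:
`p` and `q` are even, and `syd_CII(λ;p,q)` consists of the `T ∈ syd(λ;p,q)` with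
`m_T⁺(i) = m(i)/2` for every even part length `i`, and `m(i)` and `m_T⁺(i)` even
for every odd part length `i`. -/
theorem stmt3 (p q : ℕ) (hp : Even p) (hq : Even q) (lam : Nat.Partition (p + q))
    (N : ℕ) (hN : p + q ≤ N) :
    (Nat.card {T : SYD lam p q //
        (∀ i, Even i → 2 * T.f i = Multiset.count i lam.parts) ∧
          ∀ i, Odd i → Even (Multiset.count i lam.parts) ∧ Even (T.f i)} : ℤ) =
      MvPowerSeries.coeff (R := ℤ) (degOf lam p q)
        (∏ k ∈ Finset.Icc 1 N,
          geomInv (va ^ (2 * k - 2) * vb ^ (2 * k) * vt (2 * k - 1) ^ 2) *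
            geomInv (va ^ (2 * k) * vb ^ (2 * k - 2) * vt (2 * k - 1) ^ 2) *
            geomInv (va ^ (2 * k) * vb ^ (2 * k) * vt (2 * k) ^ 2)) :=
  stmt3_general p q lam N hN
end
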